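/- For complex numbers a, x, let M(a) be the 4×4 real matrix [[Re a, −Im a, −Re a, Im a],[Im a, Re a, −Im a, −Re a],[−Re a, Im a, Re a, −Im a],[−Im a, −Re a, Im a, Re a]] and v(x) = ((Re x)₊, (Im x)₊, (Re x)₋, (Im x)₋)ᵀ where z₊ = max(z,0), z₋ = max(−z,0). Then applying ReLU entrywise, σ(M(a)·v(x)) = v(a·x). -/
import Mathlib


/-- The 4×4 real matrix representing multiplication by the complex number `a`. -/
noncomputable def cplxMat (a : ℂ) : Matrix (Fin 4) (Fin 4) ℝ :=
  !![a.re, -a.im, -a.re, a.im;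
     a.im, a.re, -a.im, -a.re;
     -a.re, a.im, a.re, -a.im;
     -a.im, -a.re, a.im, a.re]

/-- The 4-real-number encoding of a complex number. -/
noncomputable def cplxVec (x : ℂ) : Fin 4 → ℝ :=
  ![max x.re 0, max x.im 0, max (-x.re) 0, max (-x.im) 0]

theorem relu_complex_multiplication (a x : ℂ) :
    (fun i => max ((cplxMat a).mulVec (cplxVec x) i) 0) = cplxVec (a * x) := by
  funext i
  have hr := max_zero_sub_max_neg_zero_eq_self x.re
  have hi := max_zero_sub_max_neg_zero_eq_self x.im
  fin_cases i <;>
    simp [cplxMat, cplxVec, Matrix.mulVec, dotProduct, Fin.sum_univ_four,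
      Complex.mul_re, Complex.mul_im]
  · congr 1; linear_combination a.re * hr - a.im * hi
  · congr 1; linear_combination a.im * hr + a.re * hi
  · congr 1; linear_combination -a.re * hr + a.im * hi
  · congr 1; linear_combination -a.im * hr - a.re * hi
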